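/- arXiv:2401.07317 — 2 statements merged into one kernel-verified Lean document; each statement's English description precedes it below -/
import Mathlib

section
/- For every x ∈ ℝⁿ, every α ≥ 0 and every z ∈ ℝⁿ: d_⊞(x,z) ≤ α if and only if for every index k, z_k = x_k whenever |x_k| > α, and |z_k| ≤ α whenever |x_k| ≤ α. (In particular, the closed ultrametric ball B_⊞(x,α] is a Cartesian product of a box with a point: it equals {x} when α is smaller than every nonzero |x_i|, and equals the Chebyshev ball {z : ‖z‖_∞ ≤ α} when α ≥ ‖x‖_∞.) -/
/-!
The distance is a maximum of the coordinate terms `|x_k ⊟ z_k|`, and `|a ⊟ b|` equals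
`max |a| |b|` except when `b = a`, where it vanishes. Hence `|a ⊟ b| ≤ α` forces `b = a` as soon
as `|a| > α`, and otherwise amounts to `|b| ≤ α`.
-/

open Filter Finset

/-- The binary idempotent operation `⊞`. -/
noncomputable def bop (a b : ℝ) : ℝ :=
  if |b| < |a| then a else if |a| < |b| then b else (a + b) / 2

/-- The unique real `(2p+1)`-th root of `t`. -/
noncomputable def oddRoot (p : ℕ) (t : ℝ) : ℝ :=
  Real.sign t * |t| ^ ((1 : ℝ) / (2 * (p : ℝ) + 1))

/-- `ξ_I[u](α) = Card{i ∈ I : u i = α} − Card{i ∈ I : u i = −α}`. -/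
noncomputable def xiMap {ι : Type*} (I : Finset ι) (u : ι → ℝ) (α : ℝ) : ℤ :=
  ((I.filter fun i => u i = α).card : ℤ) - ((I.filter fun i => u i = -α).card : ℤ)

/-- The residual index set `J_I(u)`. -/
noncomputable def resid {ι : Type*} (I : Finset ι) (u : ι → ℝ) : Finset ι :=
  I.filter fun i => xiMap I u (u i) ≠ 0

/-- The `n`-ary extension `⊞_{i ∈ I} u i` of the binary operation `⊞`. -/
noncomputable def Fop {ι : Type*} (I : Finset ι) (u : ι → ℝ) : ℝ :=
  if h : (resid I u).Nonempty then
    if 0 < xiMap I u ((resid I u).sup' h fun i => |u i|) then (resid I u).sup' h u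
    else if xiMap I u ((resid I u).sup' h fun i => |u i|) < 0 then (resid I u).inf' h u
    else 0
  else 0

/-- The Chebyshev norm `max_{i ∈ [n]} |x i|`. -/
noncomputable def chebNorm {n : ℕ} (x : Fin n → ℝ) : ℝ := ⨆ i, |x i|

/-- The ultrametric distance `d_⊞(x,y) = max_i |x_i ⊟ y_i|`. -/
noncomputable def dB {n : ℕ} (x y : Fin n → ℝ) : ℝ := ⨆ i, |bop (x i) (-(y i))|

lemma bop_of_abs_lt_left {a b : ℝ} (h : |b| < |a|) : bop a b = a := if_pos h

lemma bop_of_abs_lt_right {a b : ℝ} (h : |a| < |b|) : bop a b = b := by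
  rw [bop, if_neg h.not_gt, if_pos h]

lemma bop_self (a : ℝ) : bop a a = a := by
  rw [bop, if_neg (lt_irrefl _), if_neg (lt_irrefl _)]
  ring

lemma bop_neg_self (a : ℝ) : bop a (-a) = 0 := by
  rw [bop, abs_neg, if_neg (lt_irrefl _), if_neg (lt_irrefl _)]
  ring

lemma abs_bop_neg_le_iff {α a b : ℝ} (hα : 0 ≤ α) :
    |bop a (-b)| ≤ α ↔ (α < |a| → b = a) ∧ (|a| ≤ α → |b| ≤ α) := by
  rcases lt_trichotomy |b| |a| with hba | hab | hab
  · rw [bop_of_abs_lt_left (by rwa [abs_neg])]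
    refine ⟨fun ha => ⟨fun h => absurd ha h.not_ge, fun _ => hba.le.trans ha⟩, fun ⟨h, _⟩ => ?_⟩
    by_contra! hαa
    exact (h hαa ▸ hba).false
  · rcases abs_eq_abs.mp hab.symm with rfl | rfl
    · simp [bop_neg_self, hα]
    · rw [bop_self, abs_neg]
      refine ⟨fun hb => ⟨fun h => absurd hb h.not_ge, fun _ => hb⟩, fun ⟨h, _⟩ => ?_⟩
      by_contra! hαb
      have hb : b = 0 := by linarith [h hαb]
      simp only [hb, abs_zero] at hαb
      exact hαb.not_ge hα
  · rw [bop_of_abs_lt_right (by rwa [abs_neg]), abs_neg]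
    refine ⟨fun hb => ⟨fun h => absurd (hab.trans_le hb) h.not_gt, fun _ => hb⟩, fun ⟨h, h'⟩ => ?_⟩
    by_cases ha : |a| ≤ α
    · exact h' ha
    · exact absurd (h (not_le.mp ha) ▸ hab) (lt_irrefl _)

lemma dB_le_iff {n : ℕ} {x z : Fin n → ℝ} {α : ℝ} (hα : 0 ≤ α) :
    dB x z ≤ α ↔ ∀ i, |bop (x i) (-(z i))| ≤ α :=
  ⟨fun h i => (le_ciSup (Set.finite_range _).bddAbove i).trans h, fun h => Real.iSup_le h hα⟩

/-- description of the closed ultrametric ball `B_⊞(x,α]`. -/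
theorem stmt9 (n : ℕ) (x z : Fin n → ℝ) (α : ℝ) (hα : 0 ≤ α) :
    dB x z ≤ α ↔ ∀ k, (α < |x k| → z k = x k) ∧ (|x k| ≤ α → |z k| ≤ α) := by
  rw [dB_le_iff hα]
  exact forall_congr' fun k => abs_bop_neg_le_iff hα
end

section
/- For all x, y ∈ ℝⁿ and every z ∈ Co^∞(x,y), one has d_⊞(x,y) = max{d_⊞(x,z), d_⊞(z,y)}. -/
open Filter Finset

/-- The idempotent symmetric convex hull `Co^∞(x,y)` of two points. -/
noncomputable def coInf {n : ℕ} (x y : Fin n → ℝ) : Set (Fin n → ℝ) :=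
  { z | ∃ t r s w : ℝ, 0 ≤ t ∧ 0 ≤ r ∧ 0 ≤ s ∧ 0 ≤ w ∧
      max (max t r) (max s w) = 1 ∧
      z = fun i => Fop (Finset.univ : Finset (Fin 4)) ![t * x i, r * x i, s * y i, w * y i] }

/-! Coordinatewise, `|a ⊟ b|` is `0` if `a = b` and `max |a| |b|` otherwise, so
`|a ⊟ b| = max |a ⊟ c| |c ⊟ b|` as soon as `|c| ≤ max |a| |b|` and `c = a` whenever `a = b`.
A coordinate `c` of a point of `Co^∞(x,y)` has both properties: `⊞` returns one of its
arguments or `0`, and when `a = b` its arguments are `t a, r a, s a, w a` with coefficients in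
`[0, 1]`, one of them `1`, so `a` is an entry of maximal modulus that no entry cancels. -/

/-- The only tie `|a| = |b|` with `a ≠ b` is `a = -b`, where `a ⊟ b = (a + a) / 2 = a`. -/
lemma abs_bop_neg (a b : ℝ) : |bop a (-b)| = if a = b then 0 else max |a| |b| := by
  by_cases hab : a = b
  · subst hab
    simp [bop]
  rw [if_neg hab, bop, abs_neg]
  rcases lt_trichotomy |a| |b| with hlt | heq | hgt
  · rw [if_neg hlt.not_gt, if_pos hlt, abs_neg, max_eq_right hlt.le]
  · obtain rfl : a = -b := (abs_eq_abs.mp heq).resolve_left hab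
    simp
  · rw [if_pos hgt, max_eq_left hgt.le]

lemma abs_bop_neg_eq_max {a b c : ℝ} (hab : a = b → c = a) (hc : |c| ≤ max |a| |b|) :
    |bop a (-b)| = max |bop a (-c)| |bop c (-b)| := by
  simp only [abs_bop_neg]
  by_cases h : a = b
  · simp [h, hab h]
  by_cases hca : c = a
  · simp [hca, h]
  by_cases hcb : c = b
  · simp [hcb, h]
  rw [if_neg h, if_neg (Ne.symm hca), if_neg hcb]
  apply le_antisymm
  · exact max_le_max (le_max_left _ _) (le_max_right _ _)
  · exact max_le (max_le (le_max_left _ _) hc) (max_le hc (le_max_right _ _))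

section Fop

variable {ι : Type*} {I : Finset ι} {u : ι → ℝ}

lemma Fop_eq_zero_or_exists_eq : Fop I u = 0 ∨ ∃ i ∈ I, Fop I u = u i := by
  have hsub : resid I u ⊆ I := filter_subset _ _
  unfold Fop
  split_ifs with hne
  · obtain ⟨i, hi, h⟩ := exists_mem_eq_sup' hne u
    exact Or.inr ⟨i, hsub hi, h⟩
  · obtain ⟨i, hi, h⟩ := exists_mem_eq_inf' hne u
    exact Or.inr ⟨i, hsub hi, h⟩
  all_goals exact Or.inl rfl

lemma abs_Fop_le {M : ℝ} (hM : 0 ≤ M) (hu : ∀ i ∈ I, |u i| ≤ M) : |Fop I u| ≤ M := by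
  rcases Fop_eq_zero_or_exists_eq (I := I) (u := u) with h | ⟨i, hi, h⟩
  · rwa [h, abs_zero]
  · exact h ▸ hu i hi

lemma xiMap_neg (α : ℝ) : xiMap I u (-α) = -xiMap I u α := by
  simp only [xiMap, neg_neg]
  ring

lemma Fop_eq_of_forall_abs_le {i₀ : ι} (hi₀ : i₀ ∈ I) (hpos : 0 < xiMap I u (u i₀))
    (hle : ∀ i ∈ I, |u i| ≤ |u i₀|) : Fop I u = u i₀ := by
  have hmem : i₀ ∈ resid I u := mem_filter.mpr ⟨hi₀, hpos.ne'⟩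
  have hne : (resid I u).Nonempty := ⟨i₀, hmem⟩
  have hle' : ∀ i ∈ resid I u, |u i| ≤ |u i₀| := fun i hi => hle i (filter_subset _ _ hi)
  have hmax : (resid I u).sup' hne (fun i => |u i|) = |u i₀| :=
    le_antisymm (sup'_le _ _ hle') (le_sup' (fun i => |u i|) hmem)
  have hu₀ : u i₀ ≠ 0 := by
    intro h
    simp [xiMap, h] at hpos
  rw [Fop, dif_pos hne, hmax]
  rcases hu₀.lt_or_gt with hneg | hpos'
  · rw [abs_of_neg hneg, xiMap_neg, if_neg (by omega), if_pos (by omega)]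
    refine le_antisymm (inf'_le _ hmem) (le_inf' _ _ fun i hi => ?_)
    have := hle' i hi
    rw [abs_of_neg hneg] at this
    linarith [neg_abs_le (u i)]
  · rw [abs_of_pos hpos', if_pos hpos]
    refine le_antisymm (sup'_le _ _ fun i hi => ?_) (le_sup' _ hmem)
    have := hle' i hi
    rw [abs_of_pos hpos'] at this
    linarith [le_abs_self (u i)]

lemma Fop_mul_const {c : ι → ℝ} {i₀ : ι} (hi₀ : i₀ ∈ I) (hc₀ : c i₀ = 1)
    (hc : ∀ i ∈ I, c i ∈ Set.Icc (0 : ℝ) 1) (a : ℝ) : Fop I (fun i => c i * a) = a := by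
  by_cases ha : a = 0
  · subst ha
    simp only [mul_zero]
    rcases Fop_eq_zero_or_exists_eq (I := I) (u := fun _ => (0 : ℝ)) with h | ⟨i, -, h⟩ <;> exact h
  have hpos : 0 < xiMap I (fun i => c i * a) a := by
    have hno : I.filter (fun i => c i * a = -a) = ∅ := by
      refine filter_eq_empty_iff.mpr fun i hi h => ?_
      have : c i = -1 := mul_right_cancel₀ ha (by linarith)
      linarith [(hc i hi).1]
    have hyes : 0 < (I.filter fun i => c i * a = a).card :=
      card_pos.mpr ⟨i₀, mem_filter.mpr ⟨hi₀, by rw [hc₀, one_mul]⟩⟩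
    simp only [xiMap, hno, card_empty, Nat.cast_zero, sub_zero]
    exact_mod_cast hyes
  have key := Fop_eq_of_forall_abs_le (u := fun i => c i * a) hi₀ (by rwa [hc₀, one_mul]) ?_
  · rwa [hc₀, one_mul] at key
  intro i hi
  rw [hc₀, one_mul, abs_mul, abs_of_nonneg (hc i hi).1]
  exact mul_le_of_le_one_left (abs_nonneg a) (hc i hi).2

end Fop

lemma apply_of_mem_coInf {n : ℕ} {x y z : Fin n → ℝ} (hz : z ∈ coInf x y) (i : Fin n) :
    (x i = y i → z i = x i) ∧ |z i| ≤ max |x i| |y i| := by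
  obtain ⟨t, r, s, w, ht, hr, hs, hw, hmax, rfl⟩ := hz
  set c : Fin 4 → ℝ := ![t, r, s, w]
  have hc : ∀ j ∈ (univ : Finset (Fin 4)), c j ∈ Set.Icc (0 : ℝ) 1 := by
    obtain ⟨ht1, hr1, hs1, hw1⟩ : t ≤ 1 ∧ r ≤ 1 ∧ s ≤ 1 ∧ w ≤ 1 := by
      simp only [← hmax, le_max_iff, le_refl, true_or, or_true, and_self]
    intro j _
    fin_cases j
    exacts [⟨ht, ht1⟩, ⟨hr, hr1⟩, ⟨hs, hs1⟩, ⟨hw, hw1⟩]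
  obtain ⟨j, hj⟩ : ∃ j, c j = 1 := by
    rcases max_choice (max t r) (max s w) with h | h <;>
      [rcases max_choice t r with h' | h'; rcases max_choice s w with h' | h'] <;>
      rw [h, h'] at hmax
    exacts [⟨0, hmax⟩, ⟨1, hmax⟩, ⟨2, hmax⟩, ⟨3, hmax⟩]
  set v : Fin 4 → ℝ := ![x i, x i, y i, y i]
  have htuple : ![t * x i, r * x i, s * y i, w * y i] = fun j => c j * v j := by
    ext j
    fin_cases j <;> rfl
  simp only [htuple]
  constructor
  · intro hxy
    have hv : v = fun _ => x i := by
      ext j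
      fin_cases j <;> simp [v, hxy]
    rw [hv]
    exact Fop_mul_const (mem_univ j) hj hc (x i)
  · refine abs_Fop_le (le_max_of_le_left (abs_nonneg _)) fun k hk => ?_
    have hv : |v k| ≤ max |x i| |y i| := by
      fin_cases k <;> simp [v]
    rw [abs_mul, abs_of_nonneg (hc k hk).1]
    exact (mul_le_of_le_one_left (abs_nonneg _) (hc k hk).2).trans hv

/-- decomposition of the ultrametric distance along `Co^∞(x,y)`. -/
theorem stmt10 (n : ℕ) (x y : Fin n → ℝ) (z : Fin n → ℝ) (hz : z ∈ coInf x y) :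
    dB x y = max (dB x z) (dB z y) := by
  have hcoord (i : Fin n) :
      |bop (x i) (-(y i))| = max |bop (x i) (-(z i))| |bop (z i) (-(y i))| :=
    abs_bop_neg_eq_max (apply_of_mem_coInf hz i).1 (apply_of_mem_coInf hz i).2
  simp only [dB, hcoord]
  exact ciSup_sup_eq (Finite.bddAbove_range _) (Finite.bddAbove_range _)
end
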